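/- arXiv:2503.21151 — 4 statements merged into one kernel-verified Lean document; each statement's English description precedes it below -/
import Mathlib

section
/- Let α ≤ 2 and 1 ≤ β ≤ 4 be integers, let A, B, C, D be odd integers with gcd(A, C) = 1 and gcd(B, D) = 1, and let N be an integer with 1 ≤ N ≤ 15. Suppose one of the following holds: (i) α ≤ 0 and β ∈ {3, 4}; (ii) α = 1 and β ∈ {1, 2, 4}, or α = 2 and β ∈ {1, 2, 3}; (iii) (α, β) = (2, 4) and AD ≢ BC (mod 4). Then there do not exist rational numbers x₁, …, x_N satisfying simultaneously x₁² + ⋯ + x_N² = A/(2^α C) and x₁⁴ + ⋯ + x_N⁴ = B/(2^β D). -/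
section helpers

lemma odd_pow4_16' (z : ℤ) (h : Odd z) : (z : ZMod 16)^4 = 1 := by
  obtain ⟨m, rfl⟩ := h
  obtain ⟨c, hc⟩ : Even (m^2 + m) := by
    have := Int.even_mul_succ_self m
    simpa [mul_add, sq, mul_comm] using this
  have key : (2*m+1)^4 = 16*(m^4+2*m^3+m^2+c)+1 := by linear_combination (8:ℤ)*hc
  calc ((2*m+1 : ℤ) : ZMod 16)^4 = (((2*m+1)^4 : ℤ) : ZMod 16) := by push_cast; ring
    _ = ((16*(m^4+2*m^3+m^2+c)+1 : ℤ) : ZMod 16) := by rw [key]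
    _ = 1 := by push_cast; rw [show (16:ZMod 16) = 0 by decide]; ring

lemma even_pow4_16' (z : ℤ) (h : Even z) : (z : ZMod 16)^4 = 0 := by
  obtain ⟨m, rfl⟩ := h
  calc ((m+m : ℤ) : ZMod 16)^4 = ((16*m^4 : ℤ) : ZMod 16) := by push_cast; ring
    _ = 0 := by push_cast; rw [show (16:ZMod 16) = 0 by decide]; ring

lemma odd_sq_4' (z : ℤ) (h : Odd z) : (z : ZMod 4)^2 = 1 := by
  obtain ⟨m, rfl⟩ := h
  calc ((2*m+1 : ℤ) : ZMod 4)^2 = ((4*(m^2+m)+1 : ℤ) : ZMod 4) := by push_cast; ring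
    _ = 1 := by push_cast; rw [show (4:ZMod 4) = 0 by decide]; ring

lemma even_sq_4' (z : ℤ) (h : Even z) : (z : ZMod 4)^2 = 0 := by
  obtain ⟨m, rfl⟩ := h
  calc ((m+m : ℤ) : ZMod 4)^2 = ((4*m^2 : ℤ) : ZMod 4) := by push_cast; ring
    _ = 0 := by push_cast; rw [show (4:ZMod 4) = 0 by decide]; ring

lemma odd_pow4_16n (q : ℕ) (h : Odd q) : (q : ZMod 16)^4 = 1 := by
  have := odd_pow4_16' (q:ℤ) ((Int.odd_coe_nat q).mpr h)
  rwa [show (((q:ℤ)) : ZMod 16) = (q : ZMod 16) by push_cast; ring] at this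

lemma odd_sq_4n (q : ℕ) (h : Odd q) : (q : ZMod 4)^2 = 1 := by
  have := odd_sq_4' (q:ℤ) ((Int.odd_coe_nat q).mpr h)
  rwa [show (((q:ℤ)) : ZMod 4) = (q : ZMod 4) by push_cast; ring] at this

lemma tuple_two_pow' {N : ℕ} (j : Fin N) :
    ∀ n (w : Fin N → ℤ), (w j).natAbs = n → w j ≠ 0 →
    ∃ (e : ℕ) (z : Fin N → ℤ), (∃ i, Odd (z i)) ∧ ∀ i, w i = 2 ^ e * z i := by
  intro n
  induction n using Nat.strong_induction_on with
  | _ n ih =>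
    intro w hn hj
    by_cases h : ∃ i, Odd (w i)
    · exact ⟨0, w, h, fun i => by ring⟩
    · push_neg at h
      simp only [Int.not_odd_iff_even] at h
      have hz : ∀ i, w i = 2 * (w i / 2) := fun i => (Int.two_mul_ediv_two_of_even (h i)).symm
      have hzj : w j / 2 ≠ 0 := fun h0 => hj (by rw [hz j, h0, mul_zero])
      have hlt : (w j / 2).natAbs < n := by
        have h2 : n = 2 * (w j / 2).natAbs := by rw [← hn, hz j, Int.natAbs_mul]; norm_num
        have : 0 < (w j / 2).natAbs := Int.natAbs_pos.mpr hzj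
        omega
      obtain ⟨e, z, hodd, hwz⟩ := ih _ hlt (fun i => w i / 2) rfl hzj
      exact ⟨e + 1, z, hodd, fun i => by rw [hz i, hwz i]; ring⟩

lemma sum_pow4_16' {N : ℕ} (z : Fin N → ℤ) :
    ((∑ i, z i ^ 4 : ℤ) : ZMod 16)
      = ((Finset.univ.filter fun i => Odd (z i)).card : ZMod 16) := by
  push_cast
  rw [Finset.card_filter]
  push_cast
  refine Finset.sum_congr rfl fun i _ => ?_
  by_cases h : Odd (z i)
  · rw [if_pos h, odd_pow4_16' (z i) h]
  · rw [if_neg h, even_pow4_16' (z i) (Int.not_odd_iff_even.mp h)]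

lemma sum_sq_4' {N : ℕ} (z : Fin N → ℤ) :
    ((∑ i, z i ^ 2 : ℤ) : ZMod 4)
      = ((Finset.univ.filter fun i => Odd (z i)).card : ZMod 4) := by
  push_cast
  rw [Finset.card_filter]
  push_cast
  refine Finset.sum_congr rfl fun i _ => ?_
  by_cases h : Odd (z i)
  · rw [if_pos h, odd_sq_4' (z i) h]
  · rw [if_neg h, even_sq_4' (z i) (Int.not_odd_iff_even.mp h)]

lemma rat_mul_den' (x : ℚ) : x * (x.den : ℚ) = (x.num : ℚ) := by
  have hden : ((x.den : ℚ)) ≠ 0 := by exact_mod_cast x.den_nz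
  nth_rewrite 1 [← Rat.num_div_den x]
  exact div_mul_cancel₀ _ hden

lemma int_of_den_dvd' (x : ℚ) (n : ℕ) (h : x.den ∣ n) : ∃ m : ℤ, (m : ℚ) = x * n := by
  obtain ⟨c, hc⟩ := h
  refine ⟨x.num * c, ?_⟩
  subst hc
  push_cast
  rw [show x * ((x.den : ℚ) * c) = (x * x.den) * c by ring, rat_mul_den']

lemma nat_pow_cancel' (a b : ℤ) (hb : Odd b) (m n : ℕ) (h : a * 2^m = b * 2^n) :
    m ≤ n ∧ a = b * 2^(n-m) := by
  rcases le_or_gt m n with hmn | hmn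
  · refine ⟨hmn, ?_⟩
    have h2 : a * 2^m = b * 2^(n-m) * 2^m := by
      rw [mul_assoc, ← pow_add]
      rw [h]
      congr 2
      omega
    exact mul_right_cancel₀ (pow_ne_zero m two_ne_zero) h2
  · exfalso
    have h2 : b * 2^n = a * 2^(m-n) * 2^n := by
      rw [mul_assoc, ← pow_add, ← h]
      congr 2
      omega
    have h3 : b = a * 2^(m-n) := mul_right_cancel₀ (pow_ne_zero n two_ne_zero) h2
    have : Even b := by
      rw [h3]
      exact (Int.even_pow.mpr ⟨even_two, by omega⟩).mul_left a
    exact (Int.not_odd_iff_even.mpr this) hb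

lemma pow2_zmod4 (m : ℕ) (h : 2 ≤ m) : (2:ZMod 4)^m = 0 := by
  obtain ⟨r, rfl⟩ := Nat.exists_eq_add_of_le h
  rw [pow_add, show (2:ZMod 4)^2 = 0 by decide, zero_mul]

lemma pow2_zmod16 (m : ℕ) (h : 4 ≤ m) : (2:ZMod 16)^m = 0 := by
  obtain ⟨r, rfl⟩ := Nat.exists_eq_add_of_le h
  rw [pow_add, show (2:ZMod 16)^4 = 0 by decide, zero_mul]

end helpers

/-- Lemma 6.7: congruence-based nonexistence for the pair of Hilbert-Kamke equations
`x₁² + ⋯ + x_N² = A/(2^α C)` and `x₁⁴ + ⋯ + x_N⁴ = B/(2^β D)` with `1 ≤ N ≤ 15`,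
under either (i) `α ≤ 0` and `β ∈ {3,4}`; (ii) `(α,β) ∈ {1}×{1,2,4} ∪ {2}×{1,2,3}`;
or (iii) `(α,β) = (2,4)` and `AD ≢ BC (mod 4)`. -/
theorem stmt_16 (α : ℤ) (hα : α ≤ 2) (β : ℕ) (hβ1 : 1 ≤ β) (hβ4 : β ≤ 4)
    (A B C D : ℤ) (hA : Odd A) (hB : Odd B) (hC : Odd C) (hD : Odd D)
    (hAC : Int.gcd A C = 1) (hBD : Int.gcd B D = 1)
    (N : ℕ) (hN1 : 1 ≤ N) (hN15 : N ≤ 15)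
    (hcase :
      (α ≤ 0 ∧ (β = 3 ∨ β = 4)) ∨
      ((α = 1 ∧ (β = 1 ∨ β = 2 ∨ β = 4)) ∨ (α = 2 ∧ (β = 1 ∨ β = 2 ∨ β = 3))) ∨
      (α = 2 ∧ β = 4 ∧ ¬ (A * D ≡ B * C [ZMOD 4]))) :
    ¬ ∃ x : Fin N → ℚ,
      ∑ i, (x i) ^ 2 = (A : ℚ) / ((2 : ℚ) ^ α * C) ∧
      ∑ i, (x i) ^ 4 = (B : ℚ) / (2 ^ β * D) := by
  rintro ⟨x, eq2, eq4⟩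
  have hA0 : A ≠ 0 := by rintro rfl; simp at hA
  have hC0 : C ≠ 0 := by rintro rfl; simp at hC
  have hD0 : D ≠ 0 := by rintro rfl; simp at hD
  have hCQ : (C:ℚ) ≠ 0 := Int.cast_ne_zero.mpr hC0
  have hDQ : (D:ℚ) ≠ 0 := Int.cast_ne_zero.mpr hD0
  have h2Q : (2:ℚ) ≠ 0 := two_ne_zero
  have hpow2 : (2:ℚ)^α ≠ 0 := zpow_ne_zero α h2Q
  -- common denominator
  set d : ℕ := ∏ i, (x i).den with hddef
  have hdpos : 0 < d := Finset.prod_pos (fun i _ => (x i).pos)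
  have hdQ : (d:ℚ) ≠ 0 := Nat.cast_ne_zero.mpr hdpos.ne'
  have hwex : ∀ i, ∃ m : ℤ, (m:ℚ) = x i * d := fun i =>
    int_of_den_dvd' _ _ (Finset.dvd_prod_of_mem _ (Finset.mem_univ i))
  choose w hwx using hwex
  -- some coordinate nonzero
  have hxj : ∃ j, x j ≠ 0 := by
    by_contra h
    push_neg at h
    have hz : ∑ i, (x i)^2 = 0 := by simp [h]
    rw [eq2] at hz
    have : (A:ℚ) = 0 := by
      field_simp at hz
      simpa using hz
    exact hA0 (by exact_mod_cast this)
  obtain ⟨j, hj⟩ := hxj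
  have hwj : w j ≠ 0 := by
    intro h0
    apply hj
    have := hwx j
    rw [h0] at this
    have := this.symm
    rcases mul_eq_zero.mp (by exact_mod_cast this : x j * (d:ℚ) = 0) with h | h
    · exact h
    · exact absurd h hdQ
  obtain ⟨e, z, ⟨i₀, hi₀⟩, hwz⟩ := tuple_two_pow' j _ w rfl hwj
  obtain ⟨s, q, hq2, hdsq⟩ := Nat.exists_eq_pow_mul_and_not_dvd hdpos.ne' 2 (by norm_num)
  have hqodd : Odd q := Nat.odd_iff.mpr (Nat.two_dvd_ne_zero.mp hq2)
  have hqoddZ : Odd (q:ℤ) := (Int.odd_coe_nat q).mpr hqodd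
  set S2 : ℤ := ∑ i, z i ^ 2 with hS2def
  set S4 : ℤ := ∑ i, z i ^ 4 with hS4def
  set k : ℕ := (Finset.univ.filter fun i => Odd (z i)).card with hkdef
  have hk1 : 1 ≤ k := Finset.card_pos.mpr ⟨i₀, by simp [hi₀]⟩
  have hk15 : k ≤ 15 := le_trans (Finset.card_filter_le _ _) (by simpa using hN15)
  set γ : ℕ := (2 - α).toNat with hγdef
  have hγ : (γ:ℤ) = 2 - α := Int.toNat_of_nonneg (by omega)
  -- cast of hwx/hwz: (x i) * d = 2^e * z i in ℚ
  have hxz : ∀ i, x i * d = (2:ℚ)^e * (z i : ℚ) := by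
    intro i
    rw [← hwx i, hwz i]
    push_cast
    ring
  have hαγ : (2:ℚ)^α * (2:ℚ)^(γ:ℕ) = 4 := by
    rw [← zpow_natCast (2:ℚ) γ, ← zpow_add₀ h2Q]
    rw [hγ, show α + (2 - α) = 2 by ring]
    norm_num
  have hdQ' : (d:ℚ) = 2^s * (q:ℚ) := by exact_mod_cast congrArg (Nat.cast : ℕ → ℚ) hdsq
  -- master equation for squares
  have hsum2 : (∑ i, (x i)^2) * (d:ℚ)^2 = (2:ℚ)^(2*e) * (S2:ℚ) := by
    rw [Finset.sum_mul]
    push_cast [hS2def]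
    rw [Finset.mul_sum]
    refine Finset.sum_congr rfl fun i _ => ?_
    have := hxz i
    calc (x i)^2 * (d:ℚ)^2 = (x i * d)^2 := by ring
      _ = ((2:ℚ)^e * (z i:ℚ))^2 := by rw [this]
      _ = (2:ℚ)^(2*e) * (z i:ℚ)^2 := by rw [mul_pow, ← pow_mul, Nat.mul_comm e 2]
  have hsum4 : (∑ i, (x i)^4) * (d:ℚ)^4 = (2:ℚ)^(4*e) * (S4:ℚ) := by
    rw [Finset.sum_mul]
    push_cast [hS4def]
    rw [Finset.mul_sum]
    refine Finset.sum_congr rfl fun i _ => ?_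
    have := hxz i
    calc (x i)^4 * (d:ℚ)^4 = (x i * d)^4 := by ring
      _ = ((2:ℚ)^e * (z i:ℚ))^4 := by rw [this]
      _ = (2:ℚ)^(4*e) * (z i:ℚ)^4 := by rw [mul_pow, ← pow_mul, Nat.mul_comm e 4]
  have cross2 : ((2:ℚ)^(2*e) * (S2:ℚ)) * ((2:ℚ)^α * C) = (A:ℚ) * (d:ℚ)^2 := by
    rw [← hsum2, eq2]
    field_simp
  have cross4 : ((2:ℚ)^(4*e) * (S4:ℚ)) * ((2:ℚ)^(β:ℕ) * D) = (B:ℚ) * (d:ℚ)^4 := by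
    rw [← hsum4, eq4]
    field_simp
  -- to all-natural-power form
  have key2Q : ((C * S2 : ℤ):ℚ) * 2^(2*e+2) = (((q:ℤ)^2 * A : ℤ):ℚ) * 2^(2*s+γ) := by
    push_cast
    rw [hdQ'] at cross2
    linear_combination (2:ℚ)^(γ:ℕ) * cross2 - ((S2:ℚ) * C * (2:ℚ)^(2*e)) * hαγ
  have key4Q : ((D * S4 : ℤ):ℚ) * 2^(4*e+β) = (((q:ℤ)^4 * B : ℤ):ℚ) * 2^(4*s) := by
    push_cast
    rw [hdQ'] at cross4
    linear_combination cross4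
  have key2 : (C * S2) * 2^(2*e+2) = ((q:ℤ)^2 * A) * 2^(2*s+γ) := by exact_mod_cast key2Q
  have key4 : (D * S4) * 2^(4*e+β) = ((q:ℤ)^4 * B) * 2^(4*s) := by exact_mod_cast key4Q
  obtain ⟨hle4, E4⟩ := nat_pow_cancel' _ _ (by exact (hqoddZ.pow).mul hB) _ _ key4
  set u : ℕ := 4*s - (4*e+β) with hudef
  -- mod 16 equation
  have M16 : (D : ZMod 16) * (k : ZMod 16) = 2^u * (B : ZMod 16) := by
    have := congrArg (Int.cast : ℤ → ZMod 16) E4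
    push_cast at this
    rw [hS4def] at this
    rw [show ((∑ i, z i ^ 4 : ℤ) : ZMod 16) = (k : ZMod 16) from sum_pow4_16' z] at this
    rw [this, odd_pow4_16n q hqodd]
    ring
  -- u ≤ 3
  have hDu : (D : ZMod 16)^4 = 1 := odd_pow4_16' D hD
  have hu3 : u ≤ 3 := by
    by_contra h
    push_neg at h
    rw [pow2_zmod16 u (by omega), zero_mul] at M16
    have hk0 : (k : ZMod 16) = 0 := by
      calc (k : ZMod 16) = (D:ZMod 16)^4 * k := by rw [hDu, one_mul]
        _ = (D:ZMod 16)^3 * ((D:ZMod 16) * k) := by ring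
        _ = 0 := by rw [M16, mul_zero]
    have : (16:ℕ) ∣ k := (ZMod.natCast_eq_zero_iff k 16).mp hk0
    omega
  -- pin down exponents
  have hse : s = e + 1 := by omega
  have hu : u = 4 - β := by omega
  obtain ⟨hle2, E2⟩ := nat_pow_cancel' _ _ (by exact (hqoddZ.pow).mul hA) _ _ key2
  set t : ℕ := 2*s+γ - (2*e+2) with htdef
  have ht : (t:ℤ) = 2 - α := by omega
  -- mod 4 equation
  have M4 : (C : ZMod 4) * (k : ZMod 4) = 2^t * (A : ZMod 4) := by
    have := congrArg (Int.cast : ℤ → ZMod 4) E2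
    push_cast at this
    rw [hS2def] at this
    rw [show ((∑ i, z i ^ 2 : ℤ) : ZMod 4) = (k : ZMod 4) from sum_sq_4' z] at this
    rw [this, odd_sq_4n q hqodd]
    ring
  -- odd residues
  obtain ⟨a', ha'⟩ := hA
  obtain ⟨b', hb'⟩ := hB
  obtain ⟨c', hc'⟩ := hC
  obtain ⟨d', hd'⟩ := hD
  have hA4 : (A : ZMod 4) = 2*(a':ZMod 4)+1 := by rw [ha']; push_cast; ring
  have hC4 : (C : ZMod 4) = 2*(c':ZMod 4)+1 := by rw [hc']; push_cast; ring
  have hB16 : (B : ZMod 16) = 2*(b':ZMod 16)+1 := by rw [hb']; push_cast; ring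
  have hD16 : (D : ZMod 16) = 2*(d':ZMod 16)+1 := by rw [hd']; push_cast; ring
  -- reduce M16 to ZMod 4
  have M16' : (D : ZMod 4) * (k : ZMod 4) = 2^u * (B : ZMod 4) := by
    have := congrArg (ZMod.castHom (by norm_num : (4:ℕ) ∣ 16) (ZMod 4)) M16
    simp only [map_mul, map_pow, map_ofNat] at this
    simpa using this
  have hB4 : (B : ZMod 4) = 2*(b':ZMod 4)+1 := by rw [hb']; push_cast; ring
  have hD4 : (D : ZMod 4) = 2*(d':ZMod 4)+1 := by rw [hd']; push_cast; ring
  -- case analysis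
  rcases hcase with ⟨hα0, hβ⟩ | ⟨⟨hα1, hβ⟩ | ⟨hα2, hβ⟩⟩ | ⟨hα2, hβ', hmod⟩
  · -- α ≤ 0, β = 3 or 4 : t ≥ 2 so 2^t = 0 in ZMod 4
    rw [pow2_zmod4 t (by omega), zero_mul, hC4] at M4
    rcases hβ with rfl | rfl
    · rw [show u = 1 by omega, hD4, hB4] at M16'
      exact (by decide : ∀ (c4 d4 b4 k4 : ZMod 4),
        (2*c4+1)*k4 = 0 → (2*d4+1)*k4 = 2^1*(2*b4+1) → False) _ _ _ _ M4 M16'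
    · rw [show u = 0 by omega, hD4, hB4] at M16'
      exact (by decide : ∀ (c4 d4 b4 k4 : ZMod 4),
        (2*c4+1)*k4 = 0 → (2*d4+1)*k4 = 2^0*(2*b4+1) → False) _ _ _ _ M4 M16'
  · -- α = 1
    rw [show t = 1 by omega, hC4, hA4] at M4
    rcases hβ with rfl | rfl | rfl
    · rw [show u = 3 by omega, hD4, hB4] at M16'
      exact (by decide : ∀ (a4 c4 d4 b4 k4 : ZMod 4),
        (2*c4+1)*k4 = 2^1*(2*a4+1) → (2*d4+1)*k4 = 2^3*(2*b4+1) → False) _ _ _ _ _ M4 M16'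
    · rw [show u = 2 by omega, hD4, hB4] at M16'
      exact (by decide : ∀ (a4 c4 d4 b4 k4 : ZMod 4),
        (2*c4+1)*k4 = 2^1*(2*a4+1) → (2*d4+1)*k4 = 2^2*(2*b4+1) → False) _ _ _ _ _ M4 M16'
    · rw [show u = 0 by omega, hD4, hB4] at M16'
      exact (by decide : ∀ (a4 c4 d4 b4 k4 : ZMod 4),
        (2*c4+1)*k4 = 2^1*(2*a4+1) → (2*d4+1)*k4 = 2^0*(2*b4+1) → False) _ _ _ _ _ M4 M16'
  · -- α = 2
    rw [show t = 0 by omega, hC4, hA4] at M4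
    rcases hβ with rfl | rfl | rfl
    · rw [show u = 3 by omega, hD4, hB4] at M16'
      exact (by decide : ∀ (a4 c4 d4 b4 k4 : ZMod 4),
        (2*c4+1)*k4 = 2^0*(2*a4+1) → (2*d4+1)*k4 = 2^3*(2*b4+1) → False) _ _ _ _ _ M4 M16'
    · rw [show u = 2 by omega, hD4, hB4] at M16'
      exact (by decide : ∀ (a4 c4 d4 b4 k4 : ZMod 4),
        (2*c4+1)*k4 = 2^0*(2*a4+1) → (2*d4+1)*k4 = 2^2*(2*b4+1) → False) _ _ _ _ _ M4 M16'
    · rw [show u = 1 by omega, hD4, hB4] at M16'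
      exact (by decide : ∀ (a4 c4 d4 b4 k4 : ZMod 4),
        (2*c4+1)*k4 = 2^0*(2*a4+1) → (2*d4+1)*k4 = 2^1*(2*b4+1) → False) _ _ _ _ _ M4 M16'
  · -- α = 2, β = 4, AD ≢ BC mod 4
    subst hβ'
    rw [show t = 0 by omega, hC4, hA4] at M4
    rw [show u = 0 by omega, hD4, hB4] at M16'
    apply hmod
    have : ((A * D : ℤ) : ZMod 4) = ((B * C : ℤ) : ZMod 4) := by
      push_cast
      rw [hA4, hB4, hC4, hD4]
      exact (by decide : ∀ (a4 c4 d4 b4 k4 : ZMod 4),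
        (2*c4+1)*k4 = 2^0*(2*a4+1) → (2*d4+1)*k4 = 2^0*(2*b4+1) →
        (2*a4+1)*(2*d4+1) = (2*b4+1)*(2*c4+1)) _ _ _ _ _ M4 M16'
    exact_mod_cast (ZMod.intCast_eq_intCast_iff _ _ _).mp this
end

section
/- For every integer N with 1 ≤ N ≤ 16, there does not exist a finite set S of rational numbers with |S| = 2N + 1, closed under negation (x ∈ S implies −x ∈ S), and satisfying Σ_{x∈S} x² = (2N+1)/2 and Σ_{x∈S} x⁴ = 3(2N+1)/8. -/
/-!
Doubling the positive points `x` of the design, `y = 2x`, gives at most 16 rationals with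
`∑ y² = A` and `∑ y⁴ = 3A` for the odd integer `A = 2N + 1`, and after clearing denominators
integers with `∑ p² = A q²`, `∑ p⁴ = 3A q⁴`, `q ≠ 0`. This is impossible by 2-adic descent on `q`.
For odd `q`, `p⁴ ≡ p² (mod 4)` contradicts `3Aq⁴ - Aq² ≡ 2 (mod 4)`. For even `q`, `16 ∣ ∑ p⁴`
while `p⁴ ≡ p (mod 2)` modulo 16, so either all `p` are even (divide everything by 2) or all 16
of them are odd, which `(p² - 1)² ≡ 0 (mod 64)` rules out.
-/

open Finset

namespace Int

theorem pow_four_emod_sixteen (p : ℤ) : p ^ 4 % 16 = p % 2 := by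
  rcases Int.even_or_odd p with ⟨k, rfl⟩ | hp
  · have : (k + k) ^ 4 = 16 * k ^ 4 := by ring
    omega
  · obtain ⟨c, hc⟩ := eight_dvd_sq_sub_one_of_odd hp
    have : p ^ 4 = 16 * (c * (4 * c + 1)) + 1 := by
      linear_combination (p ^ 2 + 8 * c + 1) * hc
    have := Int.odd_iff.mp hp
    omega

theorem four_dvd_pow_four_sub_sq (p : ℤ) : 4 ∣ p ^ 4 - p ^ 2 := by
  rcases Int.even_or_odd p with ⟨k, rfl⟩ | hp
  · exact ⟨4 * k ^ 4 - k ^ 2, by ring⟩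
  · obtain ⟨c, hc⟩ := eight_dvd_sq_sub_one_of_odd hp
    exact ⟨2 * c * p ^ 2, by linear_combination p ^ 2 * hc⟩

variable {ι : Type*} (s : Finset ι) (p : ι → ℤ)

theorem sum_pow_four_ne_of_odd {A q : ℤ} (hA : Odd A) (hq : Odd q)
    (h2 : ∑ i ∈ s, p i ^ 2 = A * q ^ 2) : ∑ i ∈ s, p i ^ 4 ≠ 3 * A * q ^ 4 := by
  intro h4
  have h : 4 ∣ ∑ i ∈ s, p i ^ 4 - ∑ i ∈ s, p i ^ 2 := by
    rw [← sum_sub_distrib]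
    exact dvd_sum fun i _ ↦ four_dvd_pow_four_sub_sq (p i)
  obtain ⟨c, hc⟩ := eight_dvd_sq_sub_one_of_odd hq
  obtain ⟨u, hu⟩ := hA.mul (hq.pow (n := 2))
  have : ∑ i ∈ s, p i ^ 4 - ∑ i ∈ s, p i ^ 2 = 4 * (12 * u * c + u + 6 * c) + 2 := by
    rw [h2, h4]
    linear_combination 3 * A * q ^ 2 * hc + (24 * c + 2) * hu
  omega

theorem even_or_card_eq_sixteen_and_odd_of_sixteen_dvd (hs : #s ≤ 16)
    (h16 : 16 ∣ ∑ i ∈ s, p i ^ 4) :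
    (∀ i ∈ s, Even (p i)) ∨ (#s = 16 ∧ ∀ i ∈ s, Odd (p i)) := by
  have hsum : (∑ i ∈ s, p i % 2) % 16 = 0 := by
    simp_rw [← pow_four_emod_sixteen, ← sum_int_mod]
    exact emod_eq_zero_of_dvd h16
  have hbit : ∀ i ∈ s, 0 ≤ p i % 2 ∧ 0 ≤ 1 - p i % 2 := fun i _ ↦ by omega
  have hle : ∑ i ∈ s, p i % 2 ≤ #s := by
    simpa using sum_le_sum fun i hi ↦ sub_nonneg.1 (hbit i hi).2
  have hnonneg : 0 ≤ ∑ i ∈ s, p i % 2 := sum_nonneg fun i hi ↦ (hbit i hi).1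
  rcases (by omega : ∑ i ∈ s, p i % 2 = 0 ∨ ∑ i ∈ s, p i % 2 = 16) with hnone | hall
  · left
    intro i hi
    exact even_iff.2 ((sum_eq_zero_iff_of_nonneg fun i hi ↦ (hbit i hi).1).1 hnone i hi)
  · have hcompl : ∑ i ∈ s, (1 - p i % 2) = #s - 16 := by simp [sum_sub_distrib, hall]
    have hpos : 0 ≤ ∑ i ∈ s, (1 - p i % 2) := sum_nonneg fun i hi ↦ (hbit i hi).2
    refine Or.inr ⟨by omega, fun i hi ↦ odd_iff.2 ?_⟩
    have := (sum_eq_zero_iff_of_nonneg fun i hi ↦ (hbit i hi).2).1 (by omega) i hi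
    omega

theorem sum_pow_four_ne_of_card_eq_sixteen_of_odd (hs : #s = 16) (hp : ∀ i ∈ s, Odd (p i))
    {A m : ℤ} (hA : Odd A) (h2 : ∑ i ∈ s, p i ^ 2 = A * (2 * m) ^ 2) :
    ∑ i ∈ s, p i ^ 4 ≠ 3 * A * (2 * m) ^ 4 := by
  intro h4
  have h64 : 64 ∣ ∑ i ∈ s, p i ^ 4 - 2 * ∑ i ∈ s, p i ^ 2 + 16 := by
    have : ∑ i ∈ s, (p i ^ 2 - 1) ^ 2 = ∑ i ∈ s, p i ^ 4 - 2 * ∑ i ∈ s, p i ^ 2 + 16 := by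
      simp only [sub_sq, ← pow_mul, sum_add_distrib, sum_sub_distrib, mul_one, one_pow,
        ← mul_sum, sum_const, hs]
      norm_num
    refine this ▸ dvd_sum fun i hi ↦ ?_
    simpa using pow_dvd_pow_of_dvd (eight_dvd_sq_sub_one_of_odd (hp i hi)) 2
  rw [h2, h4] at h64
  obtain ⟨k, rfl⟩ : Even m := by
    by_contra hm
    obtain ⟨u, hu⟩ := hA.mul ((not_even_iff_odd.1 hm).pow (n := 2))
    have : 3 * A * (2 * m) ^ 4 - 2 * (A * (2 * m) ^ 2) + 16 =
        48 * (A * m ^ 4) - 16 * u + 8 := by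
      linear_combination (-8) * hu
    omega
  have : 3 * A * (2 * (k + k)) ^ 4 - 2 * (A * (2 * (k + k)) ^ 2) + 16 =
      768 * (A * k ^ 4) - 32 * (A * k ^ 2) + 16 := by ring
  omega

theorem sum_pow_eq_two_pow_mul_sum_pow_div_two (hp : ∀ i ∈ s, Even (p i)) (n : ℕ) :
    ∑ i ∈ s, p i ^ n = 2 ^ n * ∑ i ∈ s, (p i / 2) ^ n := by
  rw [mul_sum]
  exact sum_congr rfl fun i hi ↦ by rw [← mul_pow, Int.mul_ediv_cancel' (hp i hi).two_dvd]

theorem sum_pow_four_ne_of_card_le_sixteen (hs : #s ≤ 16) {A q : ℤ} (hA : Odd A) (hq : q ≠ 0)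
    (h2 : ∑ i ∈ s, p i ^ 2 = A * q ^ 2) : ∑ i ∈ s, p i ^ 4 ≠ 3 * A * q ^ 4 := by
  induction hn : q.natAbs using Nat.strong_induction_on generalizing p q with
  | _ n ih =>
  intro h4
  rcases Int.even_or_odd q with ⟨m, rfl⟩ | hq'
  · rw [← two_mul] at h2 h4
    have h16 : 16 ∣ ∑ i ∈ s, p i ^ 4 := ⟨3 * A * m ^ 4, by rw [h4]; ring⟩
    rcases even_or_card_eq_sixteen_and_odd_of_sixteen_dvd s p hs h16 with heven | ⟨hs16, hodd⟩
    · rw [sum_pow_eq_two_pow_mul_sum_pow_div_two s p heven] at h2 h4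
      refine ih m.natAbs (by omega) (fun i ↦ p i / 2) (by omega) ?_ rfl ?_
      · exact mul_left_cancel₀ (by norm_num : (2 : ℤ) ^ 2 ≠ 0) (by linear_combination h2)
      · exact mul_left_cancel₀ (by norm_num : (2 : ℤ) ^ 4 ≠ 0) (by linear_combination h4)
    · exact sum_pow_four_ne_of_card_eq_sixteen_of_odd s p hs16 hodd hA h2 h4
  · exact sum_pow_four_ne_of_odd s p hA hq' h2 h4

end Int

theorem Rat.sum_pow_four_ne_of_card_le_sixteen {ι : Type*} (s : Finset ι) (y : ι → ℚ)
    (hs : #s ≤ 16) {A : ℤ} (hA : Odd A) (h2 : ∑ i ∈ s, y i ^ 2 = A) :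
    ∑ i ∈ s, y i ^ 4 ≠ 3 * A := by
  intro h4
  obtain ⟨q, hint⟩ := IsLocalization.exist_integer_multiples (nonZeroDivisors ℤ) s y
  choose! p hp using hint
  have hpow (n : ℕ) :
      ((∑ i ∈ s, p i ^ n : ℤ) : ℚ) = ((q : ℤ) : ℚ) ^ n * ∑ i ∈ s, y i ^ n := by
    push_cast
    rw [mul_sum]
    refine sum_congr rfl fun i hi ↦ ?_
    rw [← mul_pow, ← zsmul_eq_mul]
    exact congrArg (· ^ n) (hp i hi)
  refine Int.sum_pow_four_ne_of_card_le_sixteen s p hs hA (q := q)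
    (nonZeroDivisors.coe_ne_zero q) ?_ ?_
  · exact Int.cast_injective ((hpow 2).trans (by rw [h2]; push_cast; ring))
  · exact Int.cast_injective ((hpow 4).trans (by rw [h4]; push_cast; ring))

section

variable {α : Type*} [Ring α] [LinearOrder α] [IsStrictOrderedRing α] [DecidableEq α]
  {S : Finset α}

theorem filter_neg_eq_image_neg_filter_pos (hS : ∀ x ∈ S, -x ∈ S) :
    S.filter (· < 0) = (S.filter (0 < ·)).image Neg.neg := by
  ext x
  simp only [mem_filter, mem_image]
  constructor
  · rintro ⟨hx, hx0⟩
    exact ⟨-x, ⟨hS x hx, neg_pos.2 hx0⟩, neg_neg x⟩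
  · rintro ⟨y, ⟨hy, hy0⟩, rfl⟩
    exact ⟨hS y hy, neg_neg_iff_pos.2 hy0⟩

theorem two_mul_card_filter_pos_le (hS : ∀ x ∈ S, -x ∈ S) : 2 * #(S.filter (0 < ·)) ≤ #S :=
  calc 2 * #(S.filter (0 < ·)) = #(S.filter (0 < ·)) + #(S.filter (· < 0)) := by
        rw [filter_neg_eq_image_neg_filter_pos hS, card_image_of_injective _ neg_injective]; ring
    _ = #(S.filter fun x ↦ 0 < x ∨ x < 0) := by
        rw [filter_or, card_union_of_disjoint (disjoint_filter.2 fun _ _ hx ↦ not_lt.2 hx.le)]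
    _ ≤ #S := card_filter_le _ _

theorem sum_pow_eq_two_mul_sum_filter_pos (hS : ∀ x ∈ S, -x ∈ S) {n : ℕ} (hn : Even n)
    (hn0 : n ≠ 0) : ∑ x ∈ S, x ^ n = 2 * ∑ x ∈ S.filter (0 < ·), x ^ n := by
  have hnz : ∀ x ∈ S, x ^ n ≠ 0 → 0 < x ∨ x < 0 := by
    rintro x - hx
    obtain hx0 | hx0 := (show x ≠ 0 by rintro rfl; exact hx (zero_pow hn0)).lt_or_gt
    exacts [.inr hx0, .inl hx0]
  rw [← sum_filter_of_ne hnz, filter_or,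
    sum_union (disjoint_filter.2 fun _ _ hx ↦ not_lt.2 hx.le),
    filter_neg_eq_image_neg_filter_pos hS, sum_image fun x _ y _ h ↦ neg_injective h]
  simp only [hn.neg_pow]
  exact (two_mul _).symm

end

theorem stmt_17_general (N : ℕ) (hN16 : N ≤ 16) :
    ¬ ∃ S : Finset ℚ, S.card = 2 * N + 1 ∧ (∀ x ∈ S, -x ∈ S) ∧
      ∑ x ∈ S, x ^ 2 = (2 * N + 1 : ℚ) / 2 ∧
      ∑ x ∈ S, x ^ 4 = 3 * (2 * N + 1 : ℚ) / 8 := by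
  rintro ⟨S, hcard, hS, h2, h4⟩
  have hT := two_mul_card_filter_pos_le hS
  rw [sum_pow_eq_two_mul_sum_filter_pos hS even_two two_ne_zero] at h2
  rw [sum_pow_eq_two_mul_sum_filter_pos hS ⟨2, rfl⟩ four_ne_zero] at h4
  refine Rat.sum_pow_four_ne_of_card_le_sixteen (S.filter (0 < ·)) (2 * ·) (by omega)
    (A := 2 * N + 1) ⟨N, rfl⟩ ?_ ?_
  · simp only [mul_pow, ← mul_sum]; push_cast; linear_combination 2 * h2
  · simp only [mul_pow, ← mul_sum]; push_cast; linear_combination 8 * h4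

/-- Theorem 7.1: for `1 ≤ N ≤ 16` there is no antipodal 5-design with `2N+1` rational
points for the Chebyshev measure. -/
theorem stmt_17 (N : ℕ) (hN1 : 1 ≤ N) (hN16 : N ≤ 16) :
    ¬ ∃ S : Finset ℚ, S.card = 2 * N + 1 ∧ (∀ x ∈ S, -x ∈ S) ∧
      ∑ x ∈ S, x ^ 2 = (2 * N + 1 : ℚ) / 2 ∧
      ∑ x ∈ S, x ^ 4 = 3 * (2 * N + 1 : ℚ) / 8 :=
  stmt_17_general N hN16
end

section
/- Let N be a positive integer with N ≡ 5 (mod 6) and N ∉ {5, 11}. Then there exists a finite set S of rational numbers contained in the open interval (−1, 1), with |S| = 2N + 1, closed under negation (x ∈ S implies −x ∈ S), satisfying Σ_{x∈S} x² = (2N+1)/2 and Σ_{x∈S} x⁴ = 3(2N+1)/8. -/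
namespace Stmt18Aux

def e1 (u : ℚ) : ℚ := (u^2 - 3)/(u^2 + 3)
def f2 (u : ℚ) : ℚ := (u^2 + 6*u - 3)/(2*(u^2 + 3))
def f3 (u : ℚ) : ℚ := (u^2 - 6*u - 3)/(2*(u^2 + 3))

lemma denpos (u : ℚ) : (0:ℚ) < u^2 + 3 := by positivity

lemma e1_lt_one {u : ℚ} (hu : 260 ≤ u) : e1 u < 1 := by
  rw [e1, div_lt_one (denpos u)]; nlinarith

lemma e1_gt {u : ℚ} (hu : 260 ≤ u) : 83/84 < e1 u := by
  rw [e1, lt_div_iff₀ (denpos u)]; nlinarith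

lemma f2_gt {u : ℚ} (hu : 260 ≤ u) : 1/2 < f2 u := by
  rw [f2, lt_div_iff₀ (by positivity : (0:ℚ) < 2*(u^2+3))]; nlinarith

lemma f2_lt {u : ℚ} (hu : 260 ≤ u) : f2 u < 43/84 := by
  rw [f2, div_lt_iff₀ (by positivity : (0:ℚ) < 2*(u^2+3))]; nlinarith

lemma f3_gt {u : ℚ} (hu : 260 ≤ u) : 11/28 < f3 u := by
  rw [f3, lt_div_iff₀ (by positivity : (0:ℚ) < 2*(u^2+3))]; nlinarith

lemma f3_lt {u : ℚ} (hu : 260 ≤ u) : f3 u < 1/2 := by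
  rw [f3, div_lt_iff₀ (by positivity : (0:ℚ) < 2*(u^2+3))]; nlinarith

lemma sq_sum (u : ℚ) : e1 u^2 + f2 u^2 + f3 u^2 = 3/2 := by
  have h : u^2 + 3 ≠ 0 := ne_of_gt (denpos u)
  rw [e1, f2, f3]; field_simp; ring

lemma quad_sum (u : ℚ) : e1 u^4 + f2 u^4 + f3 u^4 = 9/8 := by
  have h : u^2 + 3 ≠ 0 := ne_of_gt (denpos u)
  rw [e1, f2, f3]; field_simp; ring

lemma e1_inj {u v : ℚ} (hu : 260 ≤ u) (hv : 260 ≤ v) (h : e1 u = e1 v) : u = v := by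
  rw [e1, e1, div_eq_div_iff (ne_of_gt (denpos u)) (ne_of_gt (denpos v))] at h
  have h2 : (u - v) * (u + v) = 0 := by nlinarith
  rcases mul_eq_zero.mp h2 with h3 | h3
  · linarith
  · linarith

lemma f2_inj {u v : ℚ} (hu : 260 ≤ u) (hv : 260 ≤ v) (h : f2 u = f2 v) : u = v := by
  rw [f2, f2, div_eq_div_iff (by positivity) (by positivity)] at h
  have h2 : (u - v) * (u + v - u*v + 3) = 0 := by nlinarith
  rcases mul_eq_zero.mp h2 with h3 | h3
  · linarith
  · nlinarith

lemma f3_inj {u v : ℚ} (hu : 260 ≤ u) (hv : 260 ≤ v) (h : f3 u = f3 v) : u = v := by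
  rw [f3, f3, div_eq_div_iff (by positivity) (by positivity)] at h
  have h2 : (u - v) * (u + v + u*v - 3) = 0 := by nlinarith
  rcases mul_eq_zero.mp h2 with h3 | h3
  · linarith
  · nlinarith

def gl : List ℚ := [1/28, 5/28, 17/84, 23/84, 11/28, 43/84, 17/28, 59/84, 3/4,
  71/84, 73/84, 25/28, 11/12, 13/14, 79/84, 27/28, 83/84]

lemma gl_nodup : gl.Nodup := by norm_num [gl]

def G : Finset ℚ := ⟨(gl : Multiset ℚ), gl_nodup⟩

lemma mem_G {x : ℚ} : x ∈ G ↔ x ∈ gl := by exact Multiset.mem_coe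

lemma G_card : G.card = 17 := by simp [G, Finset.card_mk, gl]

lemma G_sum_sq : ∑ x ∈ G, x^2 = 35/4 := by
  show (Multiset.map (fun x => x^2) (gl : Multiset ℚ)).sum = 35/4
  norm_num [gl]

lemma G_sum_quad : ∑ x ∈ G, x^4 = 105/16 := by
  show (Multiset.map (fun x => x^4) (gl : Multiset ℚ)).sum = 105/16
  norm_num [gl]

lemma G_pos {x : ℚ} (hx : x ∈ G) : 0 < x ∧ x < 1 := by
  rw [mem_G] at hx
  fin_cases hx <;> norm_num

lemma G_bands {x : ℚ} (hx : x ∈ G) : x ≤ 83/84 ∧ (x ≤ 11/28 ∨ 43/84 ≤ x) := by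
  rw [mem_G] at hx
  fin_cases hx <;> norm_num

/-- the `i`-th standard triple parameter -/
def w (i : ℕ) : ℚ := 260 + i

lemma w_ge (i : ℕ) : (260:ℚ) ≤ w i := by
  have : (0:ℚ) ≤ (i:ℚ) := Nat.cast_nonneg i
  simp [w]

lemma w_inj {i j : ℕ} (h : w i = w j) : i = j := by
  have : (i:ℚ) = (j:ℚ) := by rw [w, w] at h; linarith
  exact_mod_cast this

def trip (i : ℕ) : Finset ℚ := {e1 (w i), f2 (w i), f3 (w i)}

lemma mem_trip {x : ℚ} {i : ℕ} :
    x ∈ trip i ↔ x = e1 (w i) ∨ x = f2 (w i) ∨ x = f3 (w i) := by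
  simp [trip]

lemma trip_card (i : ℕ) : (trip i).card = 3 := by
  have h1 := e1_gt (w_ge i); have h2 := f2_lt (w_ge i)
  have h3 := f2_gt (w_ge i); have h4 := f3_lt (w_ge i)
  rw [trip, Finset.card_insert_of_notMem, Finset.card_insert_of_notMem,
    Finset.card_singleton]
  · simp only [Finset.mem_singleton]; intro h; rw [h] at h3; linarith
  · simp only [Finset.mem_insert, Finset.mem_singleton]
    push_neg
    refine ⟨fun h => ?_, fun h => ?_⟩
    · rw [h] at h1; linarith
    · rw [h] at h1; linarith

lemma trip_pos {x : ℚ} {i : ℕ} (hx : x ∈ trip i) : 0 < x ∧ x < 1 := by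
  have h1 := e1_gt (w_ge i); have h1' := e1_lt_one (w_ge i)
  have h2 := f2_lt (w_ge i); have h3 := f2_gt (w_ge i)
  have h4 := f3_lt (w_ge i); have h5 := f3_gt (w_ge i)
  rcases mem_trip.mp hx with rfl | rfl | rfl <;> constructor <;> linarith

lemma trip_disj {i j : ℕ} (hij : i ≠ j) : Disjoint (trip i) (trip j) := by
  rw [Finset.disjoint_left]
  intro x hxi hxj
  have hi := w_ge i; have hj := w_ge j
  have b1 := e1_gt hi; have b2 := f2_lt hi; have b3 := f2_gt hi
  have b4 := f3_lt hi; have b5 := f3_gt hi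
  have c1 := e1_gt hj; have c2 := f2_lt hj; have c3 := f2_gt hj
  have c4 := f3_lt hj; have c5 := f3_gt hj
  rcases mem_trip.mp hxi with rfl | rfl | rfl <;>
    rcases mem_trip.mp hxj with h | h | h
  · exact hij (w_inj (e1_inj hi hj h))
  · linarith [h ▸ b1]
  · linarith [h ▸ b1]
  · linarith [h ▸ c1]
  · exact hij (w_inj (f2_inj hi hj h))
  · linarith [h ▸ b3]
  · linarith [h ▸ c1]
  · linarith [h ▸ b4]
  · exact hij (w_inj (f3_inj hi hj h))

lemma G_trip_disj (i : ℕ) : ∀ x ∈ G, x ∉ trip i := by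
  intro x hxG hxT
  obtain ⟨hb1, hb2⟩ := G_bands hxG
  have hi := w_ge i
  have b1 := e1_gt hi; have b2 := f2_lt hi; have b3 := f2_gt hi
  have b4 := f3_lt hi; have b5 := f3_gt hi
  rcases mem_trip.mp hxT with rfl | rfl | rfl
  · linarith
  · rcases hb2 with h | h <;> linarith
  · rcases hb2 with h | h <;> linarith

end Stmt18Aux

open Stmt18Aux

/-- Theorem 7.2: for `N ≡ 5 (mod 6)` with `N ∉ {5, 11}`, there exists an antipodal
5-design with `2N+1` rational points in `(-1,1)` for the Chebyshev measure. -/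
theorem stmt_18 (N : ℕ) (hN : N % 6 = 5) (hN5 : N ≠ 5) (hN11 : N ≠ 11) :
    ∃ S : Finset ℚ, (∀ x ∈ S, -1 < x ∧ x < 1) ∧ S.card = 2 * N + 1 ∧
      (∀ x ∈ S, -x ∈ S) ∧
      ∑ x ∈ S, x ^ 2 = (2 * N + 1 : ℚ) / 2 ∧
      ∑ x ∈ S, x ^ 4 = 3 * (2 * N + 1 : ℚ) / 8 := by
  obtain ⟨m, hm⟩ : ∃ m, N = 17 + 3 * m := ⟨(N - 17) / 3, by omega⟩
  -- the positive part
  set T : Finset ℚ := (Finset.range m).biUnion trip with hT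
  set P : Finset ℚ := G ∪ T with hP
  have hdisjGT : Disjoint G T := by
    rw [Finset.disjoint_left]
    intro x hxG hxT
    obtain ⟨i, _, hxi⟩ := Finset.mem_biUnion.mp hxT
    exact G_trip_disj i x hxG hxi
  have hPpos : ∀ x ∈ P, 0 < x ∧ x < 1 := by
    intro x hx
    rcases Finset.mem_union.mp hx with h | h
    · exact G_pos h
    · obtain ⟨i, _, hxi⟩ := Finset.mem_biUnion.mp h
      exact trip_pos hxi
  have hpd : ∀ i ∈ Finset.range m, ∀ j ∈ Finset.range m, i ≠ j →
      Disjoint (trip i) (trip j) := fun i _ j _ hij => trip_disj hij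
  have hTcard : T.card = 3 * m := by
    rw [hT, Finset.card_biUnion hpd]
    simp [trip_card, Finset.sum_const, mul_comm]
  have hPcard : P.card = N := by
    rw [hP, Finset.card_union_of_disjoint hdisjGT, G_card, hTcard]; omega
  have hpd' : Set.PairwiseDisjoint ↑(Finset.range m) trip := by
    intro i hi j hj hij
    exact trip_disj hij
  have htrip_sum_sq : ∀ i : ℕ, ∑ x ∈ trip i, x^2 = 3/2 := by
    intro i
    have h1 := e1_gt (w_ge i); have h2 := f2_lt (w_ge i)
    have h3 := f2_gt (w_ge i); have h4 := f3_lt (w_ge i)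
    rw [trip, Finset.sum_insert, Finset.sum_pair]
    · linarith [sq_sum (w i)]
    · intro h; rw [h] at h3; linarith
    · simp only [Finset.mem_insert, Finset.mem_singleton]
      push_neg
      refine ⟨fun h => ?_, fun h => ?_⟩ <;> (rw [h] at h1; linarith)
  have htrip_sum_quad : ∀ i : ℕ, ∑ x ∈ trip i, x^4 = 9/8 := by
    intro i
    have h1 := e1_gt (w_ge i); have h2 := f2_lt (w_ge i)
    have h3 := f2_gt (w_ge i); have h4 := f3_lt (w_ge i)
    rw [trip, Finset.sum_insert, Finset.sum_pair]
    · linarith [quad_sum (w i)]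
    · intro h; rw [h] at h3; linarith
    · simp only [Finset.mem_insert, Finset.mem_singleton]
      push_neg
      refine ⟨fun h => ?_, fun h => ?_⟩ <;> (rw [h] at h1; linarith)
  have hPsum_sq : ∑ x ∈ P, x^2 = (2*N+1 : ℚ)/4 := by
    rw [hP, Finset.sum_union hdisjGT, G_sum_sq, hT, Finset.sum_biUnion hpd']
    rw [Finset.sum_congr rfl (fun i _ => htrip_sum_sq i), Finset.sum_const,
      Finset.card_range]
    have : (N:ℚ) = 17 + 3*m := by exact_mod_cast congrArg (Nat.cast : ℕ → ℚ) hm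
    rw [this]; push_cast; ring
  have hPsum_quad : ∑ x ∈ P, x^4 = 3*(2*N+1 : ℚ)/16 := by
    rw [hP, Finset.sum_union hdisjGT, G_sum_quad, hT, Finset.sum_biUnion hpd']
    rw [Finset.sum_congr rfl (fun i _ => htrip_sum_quad i), Finset.sum_const,
      Finset.card_range]
    have : (N:ℚ) = 17 + 3*m := by exact_mod_cast congrArg (Nat.cast : ℕ → ℚ) hm
    rw [this]; push_cast; ring
  -- the full set
  refine ⟨insert 0 (P ∪ P.image (fun x => -x)), ?_, ?_, ?_, ?_, ?_⟩
  · intro x hx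
    rcases Finset.mem_insert.mp hx with rfl | hx
    · norm_num
    · rcases Finset.mem_union.mp hx with h | h
      · have := hPpos x h; constructor <;> linarith [this.1, this.2]
      · obtain ⟨y, hy, rfl⟩ := Finset.mem_image.mp h
        have := hPpos y hy; constructor <;> linarith [this.1, this.2]
  · have hdisjPN : Disjoint P (P.image (fun x => -x)) := by
      rw [Finset.disjoint_left]
      intro x hxP hxN
      obtain ⟨y, hy, hxy⟩ := Finset.mem_image.mp hxN
      have h1 := (hPpos x hxP).1
      have h2 := (hPpos y hy).1
      rw [← hxy] at h1; linarith
    have h0 : (0:ℚ) ∉ P ∪ P.image (fun x => -x) := by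
      intro h
      rcases Finset.mem_union.mp h with h | h
      · exact lt_irrefl 0 (hPpos 0 h).1
      · obtain ⟨y, hy, hxy⟩ := Finset.mem_image.mp h
        have := (hPpos y hy).1; rw [neg_eq_zero.mp hxy] at this
        exact lt_irrefl 0 this
    rw [Finset.card_insert_of_notMem h0, Finset.card_union_of_disjoint hdisjPN,
      Finset.card_image_of_injective _ neg_injective, hPcard]
    omega
  · intro x hx
    rcases Finset.mem_insert.mp hx with rfl | hx
    · simp
    · rcases Finset.mem_union.mp hx with h | h
      · exact Finset.mem_insert_of_mem (Finset.mem_union_right _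
          (Finset.mem_image.mpr ⟨x, h, rfl⟩))
      · obtain ⟨y, hy, rfl⟩ := Finset.mem_image.mp h
        rw [neg_neg]
        exact Finset.mem_insert_of_mem (Finset.mem_union_left _ hy)
  · have hdisjPN : Disjoint P (P.image (fun x => -x)) := by
      rw [Finset.disjoint_left]
      intro x hxP hxN
      obtain ⟨y, hy, hxy⟩ := Finset.mem_image.mp hxN
      have h1 := (hPpos x hxP).1
      have h2 := (hPpos y hy).1
      rw [← hxy] at h1; linarith
    have h0 : (0:ℚ) ∉ P ∪ P.image (fun x => -x) := by
      intro h
      rcases Finset.mem_union.mp h with h | h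
      · exact lt_irrefl 0 (hPpos 0 h).1
      · obtain ⟨y, hy, hxy⟩ := Finset.mem_image.mp h
        have := (hPpos y hy).1; rw [neg_eq_zero.mp hxy] at this
        exact lt_irrefl 0 this
    rw [Finset.sum_insert h0, Finset.sum_union hdisjPN,
      Finset.sum_image (fun x _ y _ h => neg_injective h)]
    have hc : ∑ y ∈ P, (-y)^2 = ∑ y ∈ P, y^2 :=
      Finset.sum_congr rfl (fun y _ => by ring)
    rw [hc, hPsum_sq]
    norm_num
    ring
  · have hdisjPN : Disjoint P (P.image (fun x => -x)) := by
      rw [Finset.disjoint_left]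
      intro x hxP hxN
      obtain ⟨y, hy, hxy⟩ := Finset.mem_image.mp hxN
      have h1 := (hPpos x hxP).1
      have h2 := (hPpos y hy).1
      rw [← hxy] at h1; linarith
    have h0 : (0:ℚ) ∉ P ∪ P.image (fun x => -x) := by
      intro h
      rcases Finset.mem_union.mp h with h | h
      · exact lt_irrefl 0 (hPpos 0 h).1
      · obtain ⟨y, hy, hxy⟩ := Finset.mem_image.mp h
        have := (hPpos y hy).1; rw [neg_eq_zero.mp hxy] at this
        exact lt_irrefl 0 this
    rw [Finset.sum_insert h0, Finset.sum_union hdisjPN,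
      Finset.sum_image (fun x _ y _ h => neg_injective h)]
    have hc : ∑ y ∈ P, (-y)^4 = ∑ y ∈ P, y^4 :=
      Finset.sum_congr rfl (fun y _ => by ring)
    rw [hc, hPsum_quad]
    norm_num
    ring
end

section
/- For every integer N with 1 ≤ N ≤ 15 and N ≠ 14, there does not exist a finite set S of rational numbers with |S| = 2N, closed under negation (x ∈ S implies −x ∈ S), and satisfying Σ_{x∈S} x² = N and Σ_{x∈S} x⁴ = 3N/2. -/
lemma sq_decomp (x r q : ℤ) (h : x = r + 8*q) :
    x^2 = r^2 + 16*(q*r + 4*q^2) ∧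
    x^4 = r^4 + 32*(r^3*q + 12*r^2*q^2 + 64*r*q^3 + 128*q^4) := by
  subst h; constructor <;> ring

lemma multiset_decomp (m : Multiset ℤ) :
    ∃ (k a b : ℕ) (j1 j2 : ℤ),
      a ≤ k ∧ k + b ≤ Multiset.card m ∧
      ((∀ x ∈ m, (2:ℤ) ∣ x) ∨ 1 ≤ k) ∧
      (m.map (fun x => x^2)).sum = (k:ℤ) + 8*a + 4*b + 16*j1 ∧
      (m.map (fun x => x^4)).sum = (k:ℤ) + 16*a + 16*b + 32*j2 := by
  induction m using Multiset.induction_on with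
  | empty => exact ⟨0,0,0,0,0, le_refl _, by simp, Or.inl (by simp), by simp, by simp⟩
  | cons x m ih =>
    obtain ⟨k,a,b,j1,j2,hak,hcard,hodd,h2,h4⟩ := ih
    obtain ⟨e2, e4⟩ := sq_decomp x (x % 8) (x / 8) (by omega)
    simp only [Multiset.map_cons, Multiset.sum_cons, Multiset.card_cons]
    have h8 : x % 8 = 0 ∨ x % 8 = 1 ∨ x % 8 = 2 ∨ x % 8 = 3 ∨ x % 8 = 4 ∨
        x % 8 = 5 ∨ x % 8 = 6 ∨ x % 8 = 7 := by omega
    have heven : x % 2 = 0 → ((∀ y ∈ x ::ₘ m, (2:ℤ) ∣ y) ∨ 1 ≤ k) := by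
      intro hx
      rcases hodd with h | h
      · refine Or.inl (fun y hy => ?_)
        rcases Multiset.mem_cons.mp hy with rfl | hy
        · omega
        · exact h y hy
      · exact Or.inr h
    rcases h8 with h | h | h | h | h | h | h | h
    · rw [h] at e2 e4
      exact ⟨k, a, b, j1 + 4*(x/8)^2, j2 + 128*(x/8)^4,
        hak, by omega, heven (by omega), by push_cast; linarith, by push_cast; linarith⟩
    · rw [h] at e2 e4
      exact ⟨k+1, a, b, j1 + (x/8 + 4*(x/8)^2),
        j2 + (x/8 + 12*(x/8)^2 + 64*(x/8)^3 + 128*(x/8)^4),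
        by omega, by omega, Or.inr (by omega), by push_cast; linarith, by push_cast; linarith⟩
    · rw [h] at e2 e4
      exact ⟨k, a, b+1, j1 + (2*(x/8) + 4*(x/8)^2),
        j2 + (8*(x/8) + 48*(x/8)^2 + 128*(x/8)^3 + 128*(x/8)^4),
        hak, by omega, heven (by omega), by push_cast; linarith, by push_cast; linarith⟩
    · rw [h] at e2 e4
      exact ⟨k+1, a+1, b, j1 + (3*(x/8) + 4*(x/8)^2),
        j2 + (2 + 27*(x/8) + 108*(x/8)^2 + 192*(x/8)^3 + 128*(x/8)^4),
        by omega, by omega, Or.inr (by omega), by push_cast; linarith, by push_cast; linarith⟩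
    · rw [h] at e2 e4
      exact ⟨k, a, b, j1 + (1 + 4*(x/8) + 4*(x/8)^2),
        j2 + (8 + 64*(x/8) + 192*(x/8)^2 + 256*(x/8)^3 + 128*(x/8)^4),
        hak, by omega, heven (by omega), by push_cast; linarith, by push_cast; linarith⟩
    · rw [h] at e2 e4
      exact ⟨k+1, a+1, b, j1 + (1 + 5*(x/8) + 4*(x/8)^2),
        j2 + (19 + 125*(x/8) + 300*(x/8)^2 + 320*(x/8)^3 + 128*(x/8)^4),
        by omega, by omega, Or.inr (by omega), by push_cast; linarith, by push_cast; linarith⟩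
    · rw [h] at e2 e4
      exact ⟨k, a, b+1, j1 + (2 + 6*(x/8) + 4*(x/8)^2),
        j2 + (40 + 216*(x/8) + 432*(x/8)^2 + 384*(x/8)^3 + 128*(x/8)^4),
        hak, by omega, heven (by omega), by push_cast; linarith, by push_cast; linarith⟩
    · rw [h] at e2 e4
      exact ⟨k+1, a, b, j1 + (3 + 7*(x/8) + 4*(x/8)^2),
        j2 + (75 + 343*(x/8) + 588*(x/8)^2 + 448*(x/8)^3 + 128*(x/8)^4),
        by omega, by omega, Or.inr (by omega), by push_cast; linarith, by push_cast; linarith⟩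

lemma exists_half (m : Multiset ℤ) (h : ∀ x ∈ m, (2:ℤ) ∣ x) :
    ∃ m' : Multiset ℤ, m = m'.map (fun x => 2*x) := by
  induction m using Multiset.induction_on with
  | empty => exact ⟨0, by simp⟩
  | cons x m ih =>
    obtain ⟨y, hy⟩ := h x (Multiset.mem_cons_self x m)
    obtain ⟨m', hm'⟩ := ih (fun z hz => h z (Multiset.mem_cons_of_mem hz))
    exact ⟨y ::ₘ m', by simp [Multiset.map_cons, ← hm', hy]⟩

lemma odd_sq (e : ℤ) (he : e % 2 = 1) :
    ∃ t s : ℤ, e^2 = 8*t + 1 ∧ e^4 = 16*s + 1 := by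
  obtain ⟨t, ht⟩ : ∃ t, e^2 = 8*t + 1 := by
    obtain ⟨u, hu⟩ : ∃ u, e = 2*u + 1 := ⟨e / 2, by omega⟩
    rcases Int.even_or_odd u with ⟨v, hv⟩ | ⟨v, hv⟩
    · exact ⟨2*v^2 + v, by rw [hu, hv]; ring⟩
    · exact ⟨2*v^2 + 3*v + 1, by rw [hu, hv]; ring⟩
  exact ⟨t, 4*t^2 + t, ht, by rw [show e^4 = (e^2)^2 by ring, ht]; ring⟩

lemma core (N : ℕ) (hN1 : 1 ≤ N) (hN15 : N ≤ 15) (hN14 : N ≠ 14) :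
    ∀ d : ℕ, ∀ m : Multiset ℤ, 0 < d → Multiset.card m ≤ N →
      2 * (m.map (fun x => x^2)).sum = (N:ℤ) * d^2 →
      4 * (m.map (fun x => x^4)).sum = 3 * (N:ℤ) * d^4 → False := by
  intro d
  induction d using Nat.strong_induction_on with
  | _ d ih =>
  intro m hd hcard h2 h4
  obtain ⟨k, a, b, j1, j2, hak, hkb, hor, hs2, hs4⟩ := multiset_decomp m
  rcases Nat.even_or_odd d with ⟨e, he⟩ | hdo
  · -- d even, d = 2e
    have hd2 : ((d:ℤ))^2 = 4*(e:ℤ)^2 := by push_cast; rw [show (d:ℤ) = 2*e by push_cast; omega]; ring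
    have hd4 : ((d:ℤ))^4 = 16*(e:ℤ)^4 := by rw [show (d:ℤ) = 2*e by push_cast; omega]; ring
    rw [hd2] at h2; rw [hd4] at h4
    rcases hor with hall | hk1
    · -- all elements even: descent
      obtain ⟨m', hm'⟩ := exists_half m hall
      have hcm : Multiset.card m' = Multiset.card m := by rw [hm', Multiset.card_map]
      have hsum2 : (m.map (fun x => x^2)).sum = 4 * (m'.map (fun x => x^2)).sum := by
        rw [hm', Multiset.map_map]
        rw [show ((fun x => x^2) ∘ (fun x : ℤ => 2*x)) = fun x : ℤ => 4*x^2 by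
          funext x; simp; ring]
        exact Multiset.sum_map_mul_left
      have hsum4 : (m.map (fun x => x^4)).sum = 16 * (m'.map (fun x => x^4)).sum := by
        rw [hm', Multiset.map_map]
        rw [show ((fun x => x^4) ∘ (fun x : ℤ => 2*x)) = fun x : ℤ => 16*x^4 by
          funext x; simp; ring]
        exact Multiset.sum_map_mul_left
      have he0 : 0 < e := by omega
      refine ih e (by omega) m' he0 (by omega) ?_ ?_
      · rw [hsum2] at h2
        have hr : (N:ℤ) * (4*(e:ℤ)^2) = 4 * ((N:ℤ) * (e:ℤ)^2) := by ring
        rw [hr] at h2; linarith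
      · rw [hsum4] at h4
        have hr : 3 * (N:ℤ) * (16*(e:ℤ)^4) = 16 * (3 * (N:ℤ) * (e:ℤ)^4) := by ring
        rw [hr] at h4; linarith
    · -- some odd element: 1 ≤ k
      rw [hs2] at h2; rw [hs4] at h4
      have heq2 : (k:ℤ) + 8*a + 4*b + 16*j1 = 2 * ((N:ℤ) * (e:ℤ)^2) := by
        have : (N:ℤ) * (4*(e:ℤ)^2) = 4 * ((N:ℤ) * (e:ℤ)^2) := by ring
        rw [this] at h2; linarith
      have heq4 : (k:ℤ) + 16*a + 16*b + 32*j2 = 12 * ((N:ℤ) * (e:ℤ)^4) := by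
        have : 3 * (N:ℤ) * (16*(e:ℤ)^4) = 48 * ((N:ℤ) * (e:ℤ)^4) := by ring
        rw [this] at h4; linarith
      clear h2 h4 hs2 hs4
      rcases Nat.even_or_odd e with ⟨f, hf⟩ | heo
      · -- e even
        have : 12 * ((N:ℤ) * (e:ℤ)^4) = 192 * ((N:ℤ) * (f:ℤ)^4) := by
          rw [show ((e:ℤ)) = 2*(f:ℤ) by push_cast; omega]; ring
        rw [this] at heq4
        generalize (N:ℤ) * (f:ℤ)^4 = R at heq4
        clear heq2
        omega
      · -- e odd
        have heo' : (e:ℤ) % 2 = 1 := by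
          have := Nat.odd_iff.mp heo; omega
        obtain ⟨t, s, ht, hs⟩ := odd_sq (e:ℤ) heo'
        rw [ht] at heq2; rw [hs] at heq4
        rw [show 2 * ((N:ℤ) * (8*t+1)) = 16 * ((N:ℤ)*t) + 2*N by ring] at heq2
        rw [show 12 * ((N:ℤ) * (16*s+1)) = 192 * ((N:ℤ)*s) + 12*N by ring] at heq4
        generalize (N:ℤ)*t = P at heq2
        generalize (N:ℤ)*s = Q at heq4
        by_cases hN10 : N = 10
        · subst hN10
          have hk8 : k = 8 := by omega
          have hb : b ≤ 2 := by omega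
          interval_cases b <;> omega
        · interval_cases N <;> omega
  · -- d odd
    have hdo' : (d:ℤ) % 2 = 1 := by
      have := Nat.odd_iff.mp hdo; omega
    obtain ⟨t, s, ht, hs⟩ := odd_sq (d:ℤ) hdo'
    rw [ht] at h2; rw [hs] at h4
    rw [hs2] at h2; rw [hs4] at h4
    rw [show (N:ℤ) * (8*t+1) = 8 * ((N:ℤ)*t) + N by ring] at h2
    rw [show 3 * (N:ℤ) * (16*s+1) = 48 * ((N:ℤ)*s) + 3*N by ring] at h4
    generalize (N:ℤ)*t = P at h2
    generalize (N:ℤ)*s = Q at h4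
    omega

/-- Theorem 7.4: for `1 ≤ N ≤ 15` with `N ≠ 14`, there is no antipodal 5-design with
`2N` rational points for the Hermite measure. -/
theorem stmt_19 (N : ℕ) (hN1 : 1 ≤ N) (hN15 : N ≤ 15) (hN14 : N ≠ 14) :
    ¬ ∃ S : Finset ℚ, S.card = 2 * N ∧ (∀ x ∈ S, -x ∈ S) ∧
      ∑ x ∈ S, x ^ 2 = (N : ℚ) ∧
      ∑ x ∈ S, x ^ 4 = 3 * (N : ℚ) / 2 := by
  classical
  rintro ⟨S, hScard, hneg, hS2, hS4⟩
  set T := S.filter (fun x => 0 < x) with hT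
  have himg : S.filter (fun x => x < 0) = T.image (fun x => -x) := by
    ext y
    simp only [hT, Finset.mem_filter, Finset.mem_image]
    constructor
    · rintro ⟨hyS, hy⟩
      exact ⟨-y, ⟨hneg y hyS, by linarith⟩, by ring⟩
    · rintro ⟨x, ⟨hxS, hx⟩, rfl⟩
      exact ⟨hneg x hxS, by linarith⟩
  have hinj : ∀ x ∈ T, ∀ y ∈ T, -x = -y → x = y := fun x _ y _ h => by linarith
  have hsplit : ∀ g : ℚ → ℚ, (∀ x : ℚ, g (-x) = g x) → g 0 = 0 →
      ∑ x ∈ S, g x = 2 * ∑ x ∈ T, g x := by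
    intro g hgeven hg0
    have h1 : ∑ x ∈ S.filter (fun x => ¬ 0 < x), g x
        = ∑ x ∈ S.filter (fun x => x < 0), g x := by
      refine (Finset.sum_subset ?_ ?_).symm
      · intro x hx
        simp only [Finset.mem_filter] at hx ⊢
        exact ⟨hx.1, by linarith [hx.2]⟩
      · intro x hx hx'
        simp only [Finset.mem_filter] at hx hx'
        have hx0 : x = 0 := by
          by_contra h0
          exact hx' ⟨hx.1, lt_of_le_of_ne (by linarith [hx.2]) h0⟩
        rw [hx0, hg0]
    calc ∑ x ∈ S, g x
        = ∑ x ∈ T, g x + ∑ x ∈ S.filter (fun x => ¬ 0 < x), g x :=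
          (Finset.sum_filter_add_sum_filter_not S _ g).symm
      _ = ∑ x ∈ T, g x + ∑ x ∈ T.image (fun x => -x), g x := by rw [h1, himg]
      _ = ∑ x ∈ T, g x + ∑ x ∈ T, g (-x) := by rw [Finset.sum_image hinj]
      _ = 2 * ∑ x ∈ T, g x := by
          rw [Finset.sum_congr rfl (fun x _ => hgeven x)]; ring
  have hT2 : 2 * ∑ x ∈ T, x ^ 2 = (N : ℚ) := by
    rw [← hS2]; exact (hsplit (fun x => x^2) (fun x => by ring) (by norm_num)).symm
  have hT4 : 4 * ∑ x ∈ T, x ^ 4 = 3 * (N : ℚ) := by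
    have := hsplit (fun x => x^4) (fun x => by ring) (by norm_num)
    rw [this] at hS4; linarith
  -- card bound
  have hdisj : Disjoint T (T.image (fun x => -x)) := by
    rw [Finset.disjoint_left]
    intro x hx hx2
    simp only [hT, Finset.mem_filter, Finset.mem_image] at hx hx2
    obtain ⟨y, ⟨_, hy⟩, rfl⟩ := hx2
    linarith [hx.2]
  have hTcard : T.card ≤ N := by
    have hsub : T ∪ T.image (fun x => -x) ⊆ S := by
      refine Finset.union_subset (Finset.filter_subset _ _) ?_
      rw [← himg]; exact Finset.filter_subset _ _
    have h1 := Finset.card_le_card hsub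
    rw [Finset.card_union_of_disjoint hdisj,
      Finset.card_image_of_injective T neg_injective, hScard] at h1
    omega
  -- clear denominators
  set d : ℕ := ∏ x ∈ T, x.den with hd
  have hd0 : 0 < d := Finset.prod_pos fun x _ => x.pos
  set f : ℚ → ℤ := fun x => (x * d).num with hf
  have hfx : ∀ x ∈ T, ((f x : ℚ)) = x * d := by
    intro x hx
    obtain ⟨c, hc⟩ := Finset.dvd_prod_of_mem (fun x : ℚ => x.den) hx
    have hdc : (d : ℚ) = (x.den : ℚ) * (c : ℚ) := by
      have h' : d = x.den * c := hc
      exact_mod_cast h'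
    have h1 : x * (d : ℚ) = ((x.num * c : ℤ) : ℚ) := by
      rw [hdc]
      nth_rewrite 1 [← Rat.num_div_den x]
      push_cast
      have : ((x.den : ℚ)) ≠ 0 := by positivity
      field_simp
    rw [hf]; simp only [h1, Rat.num_intCast]
  -- the integer multiset
  set m : Multiset ℤ := T.val.map f with hm
  have hmcard : Multiset.card m = T.card := by rw [hm, Multiset.card_map]; rfl
  have hmsum2 : (m.map (fun x => x^2)).sum = ∑ x ∈ T, (f x)^2 := by
    rw [hm, Multiset.map_map]; rfl
  have hmsum4 : (m.map (fun x => x^4)).sum = ∑ x ∈ T, (f x)^4 := by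
    rw [hm, Multiset.map_map]; rfl
  have hint2 : 2 * (m.map (fun x => x^2)).sum = (N:ℤ) * (d:ℤ)^2 := by
    rw [hmsum2]
    have hq : ((2 * ∑ x ∈ T, (f x)^2 : ℤ) : ℚ) = (((N:ℤ) * (d:ℤ)^2 : ℤ) : ℚ) := by
      push_cast
      have e1 : ∑ x ∈ T, ((f x : ℚ))^2 = (∑ x ∈ T, x^2) * (d:ℚ)^2 := by
        rw [Finset.sum_mul]
        exact Finset.sum_congr rfl fun x hx => by rw [hfx x hx]; ring
      rw [e1]
      linear_combination (d:ℚ)^2 * hT2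
    exact_mod_cast hq
  have hint4 : 4 * (m.map (fun x => x^4)).sum = 3 * (N:ℤ) * (d:ℤ)^4 := by
    rw [hmsum4]
    have hq : ((4 * ∑ x ∈ T, (f x)^4 : ℤ) : ℚ) = ((3 * (N:ℤ) * (d:ℤ)^4 : ℤ) : ℚ) := by
      push_cast
      have e1 : ∑ x ∈ T, ((f x : ℚ))^4 = (∑ x ∈ T, x^4) * (d:ℚ)^4 := by
        rw [Finset.sum_mul]
        exact Finset.sum_congr rfl fun x hx => by rw [hfx x hx]; ring
      rw [e1]
      linear_combination (d:ℚ)^4 * hT4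
    exact_mod_cast hq
  exact core N hN1 hN15 hN14 d m hd0 (by omega) hint2 hint4
end
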